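/- arXiv:math-ph/0304008 — 2 statements merged into one kernel-verified Lean document; each statement's English description precedes it below -/
import Mathlib

section
/- Let p, q ∈ ℂ[X] be nonzero polynomials that are squarefree and coprime (no repeated and no common roots). Then the following are equivalent: (i) both p/q² and q⁴/p² admit rational antiderivatives, i.e. there exist a, b ∈ ℂ[X] with b ≠ 0 and (a'·b − a·b')·q² = p·b², and there exist c, d ∈ ℂ[X] with d ≠ 0 and (c'·d − c·d')·p² = q⁴·d²; (ii) p''·q − 4·p'·q' + 4·p·q'' = 0 (that is, {p,q}_2 = 0). -/
/-!
If `N / q²` has a rational antiderivative `a / b` in lowest terms, comparing root multiplicities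
in `W(b, a) · q² = N · b²` (with `W` the Wronskian) forces `b` to be a constant multiple of `q`,
so `N = W(q, A)` for a polynomial `A`. Since `q` is separable and every polynomial has an
antiderivative, such an `A` exists exactly when `q ∣ N' q' - N q''`, i.e. when all residues of
`N / q²` vanish. For `p / q²` and `q⁴ / p²` these two divisibilities say that `q` and `p` divide
`{p, q}_2`, whose degree is smaller than that of `p q`.
-/

open Polynomial

namespace Polynomial

variable {R : Type*} [CommRing R] {K : Type*} [Field K]

theorem wronskian_mul_mul (g a b : R[X]) : wronskian (g * a) (g * b) = g ^ 2 * wronskian a b := by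
  simp only [wronskian, derivative_mul]
  ring

theorem dvd_of_wronskian_eq {q A N : R[X]} (h : wronskian q A = N) :
    q ∣ derivative N * derivative q - N * derivative (derivative q) := by
  subst h
  refine ⟨derivative (derivative A) * derivative q - derivative A * derivative (derivative q), ?_⟩
  simp only [wronskian, derivative_mul, derivative_sub]
  ring

theorem exists_derivative_eq [CharZero K] (f : K[X]) : ∃ F : K[X], derivative F = f := by
  induction f using Polynomial.induction_on' with
  | add f g hf hg =>
    obtain ⟨F, rfl⟩ := hf
    obtain ⟨G, rfl⟩ := hg
    exact ⟨F + G, derivative_add⟩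
  | monomial n a =>
    refine ⟨C (a / (n + 1)) * X ^ (n + 1), ?_⟩
    rw [derivative_C_mul_X_pow, ← C_mul_X_pow_eq_monomial]
    simp [Nat.cast_add_one_ne_zero]

/-- The derivative of `a / b` is `wronskian b a / b ^ 2`. -/
def HasRationalAntiderivative (N D : K[X]) : Prop :=
  ∃ a b : K[X], b ≠ 0 ∧ wronskian b a * D = N * b ^ 2

theorem HasRationalAntiderivative.exists_isCoprime {N D : K[X]}
    (h : HasRationalAntiderivative N D) :
    ∃ a b : K[X], b ≠ 0 ∧ IsCoprime a b ∧ wronskian b a * D = N * b ^ 2 := by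
  classical
  obtain ⟨a, b, hb, heq⟩ := h
  obtain ⟨a₀, b₀, ha, hb₀, hunit⟩ := extract_gcd a b
  set g := gcd a b
  have hg : g ≠ 0 := fun h0 => hb (by rw [hb₀, h0, zero_mul])
  refine ⟨a₀, b₀, fun h0 => hb (by rw [hb₀, h0, mul_zero]),
    (gcd_isUnit_iff_isRelPrime.mp hunit).isCoprime, mul_left_cancel₀ (pow_ne_zero 2 hg) ?_⟩
  rw [ha, hb₀, wronskian_mul_mul] at heq
  linear_combination heq

theorem not_pow_rootMultiplicity_dvd_wronskian [CharZero K] {a b : K[X]} {r : K}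
    (hab : IsCoprime a b) (hb : b ≠ 0) (hr : b.IsRoot r) :
    ¬ (X - C r) ^ rootMultiplicity r b ∣ wronskian b a := by
  intro hdvd
  have hb_dvd : (X - C r) ^ rootMultiplicity r b ∣ b := pow_rootMultiplicity_dvd b r
  have hb' : derivative b ≠ 0 := by
    intro h0
    rw [eq_C_of_derivative_eq_zero h0, IsRoot, eval_C] at hr
    exact hb (by rw [eq_C_of_derivative_eq_zero h0, hr, C_0])
  have hdvd' : (X - C r) ^ rootMultiplicity r b ∣ derivative b * a := by
    have := dvd_sub (dvd_mul_of_dvd_left hb_dvd (derivative a)) hdvd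
    rwa [wronskian, sub_sub_cancel] at this
  have hb'_dvd := (hab.of_isCoprime_of_dvd_right hb_dvd).symm.dvd_of_dvd_mul_right hdvd'
  rw [← le_rootMultiplicity_iff hb', derivative_rootMultiplicity_of_root hr] at hb'_dvd
  have hpos := (rootMultiplicity_pos hb).mpr hr
  omega

theorem not_isRoot_of_wronskian_mul_eq [CharZero K] {q c a N : K[X]} (hq : Squarefree q)
    (hc : c ≠ 0) (hac : IsCoprime a (q * c)) (h : wronskian (q * c) a = N * c ^ 2) (r : K) :
    ¬ c.IsRoot r := by
  intro hr
  have hqc : q * c ≠ 0 := mul_ne_zero hq.ne_zero hc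
  refine not_pow_rootMultiplicity_dvd_wronskian hac hqc (root_mul.mpr (Or.inr hr)) ?_
  have hq₁ : rootMultiplicity r q ≤ 1 :=
    rootMultiplicity_le_one_of_separable (PerfectField.separable_iff_squarefree.mpr hq) r
  have hc₁ : 1 ≤ rootMultiplicity r c := (rootMultiplicity_pos hc).mpr hr
  rw [h, rootMultiplicity_mul hqc]
  calc (X - C r) ^ (rootMultiplicity r q + rootMultiplicity r c)
      ∣ ((X - C r) ^ rootMultiplicity r c) ^ 2 := by
        rw [← pow_mul]; exact pow_dvd_pow _ (by omega)
    _ ∣ c ^ 2 := pow_dvd_pow_of_dvd (pow_rootMultiplicity_dvd c r) 2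
    _ ∣ N * c ^ 2 := dvd_mul_left _ _

theorem HasRationalAntiderivative.exists_wronskian_eq [IsAlgClosed K] [CharZero K]
    {N q : K[X]} (hq : Squarefree q) (hN : IsCoprime N q)
    (h : HasRationalAntiderivative N (q ^ 2)) : ∃ A, wronskian q A = N := by
  obtain ⟨a, b, hb, hab, heq⟩ := h.exists_isCoprime
  obtain ⟨c, rfl⟩ : q ∣ b := by
    refine (IsIntegrallyClosed.pow_dvd_pow_iff two_ne_zero).mp
      (hN.symm.pow_left.dvd_of_dvd_mul_left ⟨wronskian b a, ?_⟩)
    rw [← heq, mul_comm]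
  have hc : c ≠ 0 := right_ne_zero_of_mul hb
  have hW : wronskian (q * c) a = N * c ^ 2 :=
    mul_right_cancel₀ (pow_ne_zero 2 hq.ne_zero) (by rw [heq]; ring)
  obtain ⟨γ, rfl⟩ : ∃ γ, c = C γ := by
    refine ⟨c.coeff 0, eq_C_of_degree_eq_zero ?_⟩
    by_contra hdeg
    obtain ⟨r, hr⟩ := IsAlgClosed.exists_root c hdeg
    exact not_isRoot_of_wronskian_mul_eq hq hc hab hW r hr
  have hγ : γ ≠ 0 := fun h0 => hc (by rw [h0, C_0])
  have hW' : wronskian q a = C γ * N := by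
    refine mul_left_cancel₀ hc ?_
    simp only [wronskian, derivative_mul, derivative_C, mul_zero, add_zero] at hW ⊢
    linear_combination hW
  refine ⟨C γ⁻¹ * a, ?_⟩
  calc wronskian q (C γ⁻¹ * a) = C γ⁻¹ * wronskian q a := by
        simp only [wronskian, derivative_C_mul]; ring
    _ = N := by rw [hW', ← mul_assoc, ← C_mul, inv_mul_cancel₀ hγ, C_1, one_mul]

theorem exists_wronskian_eq_of_dvd [CharZero K] {q N : K[X]} (hq : q.Separable)
    (h : q ∣ derivative N * derivative q - N * derivative (derivative q)) :
    ∃ A, wronskian q A = N := by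
  -- Bézout splits `N = W(q, G) + r q`; the hypothesis forces `q ∣ r`, and then
  -- `r q = W(q, S q)` for an antiderivative `S` of `r / q`.
  obtain ⟨u, v, huv⟩ := id hq
  set G : K[X] := -(N * v)
  set r : K[X] := N * u + derivative (N * v)
  have hNG : wronskian q G + r * q = N := by
    simp only [wronskian, G, r, derivative_neg]
    linear_combination N * huv
  have hGq : q ∣ derivative (wronskian q G) * derivative q
      - wronskian q G * derivative (derivative q) := dvd_of_wronskian_eq rfl
  obtain ⟨s, hs⟩ : q ∣ r := by
    refine (hq.pow_right (n := 2)).dvd_of_dvd_mul_right ?_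
    have hr : r * derivative q ^ 2 = (derivative N * derivative q - N * derivative (derivative q))
        - (derivative (wronskian q G) * derivative q - wronskian q G * derivative (derivative q))
        - q * (derivative r * derivative q - r * derivative (derivative q)) := by
      rw [← hNG]; simp only [derivative_add, derivative_mul]; ring
    rw [hr]
    exact dvd_sub (dvd_sub h hGq) (dvd_mul_right _ _)
  obtain ⟨S, rfl⟩ := exists_derivative_eq s
  refine ⟨G + S * q, ?_⟩
  simp only [wronskian, derivative_add, derivative_mul] at hNG ⊢
  linear_combination hNG - q * hs

theorem hasRationalAntiderivative_div_sq_iff [IsAlgClosed K] [CharZero K] {N q : K[X]}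
    (hq : Squarefree q) (hN : IsCoprime N q) :
    HasRationalAntiderivative N (q ^ 2) ↔
      q ∣ derivative N * derivative q - N * derivative (derivative q) := by
  refine ⟨fun h => ?_, fun h => ?_⟩
  · obtain ⟨A, hA⟩ := h.exists_wronskian_eq hq hN
    exact dvd_of_wronskian_eq hA
  · obtain ⟨A, hA⟩ :=
      exists_wronskian_eq_of_dvd (PerfectField.separable_iff_squarefree.mpr hq) h
    exact ⟨A, q, hq.ne_zero, by rw [hA]⟩

/-- The bracket `{p, q}_Λ`. -/
noncomputable def bilinearBracket (Λ : R) (p q : R[X]) : R[X] :=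
  derivative (derivative p) * q - (2 * Λ) • (derivative p * derivative q)
    + Λ ^ 2 • (p * derivative (derivative q))

theorem bilinearBracket_two (p q : R[X]) :
    bilinearBracket 2 p q = derivative (derivative p) * q - 4 * derivative p * derivative q
      + 4 * p * derivative (derivative q) := by
  have h₄ : C ((2 : R) * 2) = 4 := by norm_num [C_ofNat]
  have h₄' : C ((2 : R) ^ 2) = 4 := by norm_num [C_ofNat]
  simp only [bilinearBracket, smul_eq_C_mul, h₄, h₄']
  ring

theorem degree_bilinearBracket_lt [IsDomain R] (Λ : R) {p q : R[X]} (hp : p ≠ 0) (hq : q ≠ 0) :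
    degree (bilinearBracket Λ p q) < degree (p * q) := by
  have hp₂ : degree (derivative (derivative p)) < degree p :=
    degree_derivative_le.trans_lt (degree_derivative_lt hp)
  have hq₂ : degree (derivative (derivative q)) < degree q :=
    degree_derivative_le.trans_lt (degree_derivative_lt hq)
  have hpq : degree (p * q) = degree p + degree q := degree_mul
  have hp_bot : degree p ≠ ⊥ := degree_ne_bot.mpr hp
  have hq_bot : degree q ≠ ⊥ := degree_ne_bot.mpr hq
  have h₁ : degree (derivative (derivative p) * q) < degree (p * q) := by
    rw [degree_mul, hpq]; exact WithBot.add_lt_add_of_lt_of_le hq_bot hp₂ le_rfl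
  have h₂ : degree ((2 * Λ) • (derivative p * derivative q)) < degree (p * q) := by
    calc degree ((2 * Λ) • (derivative p * derivative q))
        ≤ degree (derivative p) + degree q :=
          (degree_smul_le _ _).trans <| (degree_mul_le _ _).trans <| by
            gcongr; exact degree_derivative_le
      _ < degree (p * q) := by
          rw [hpq]; exact WithBot.add_lt_add_of_lt_of_le hq_bot (degree_derivative_lt hp) le_rfl
  have h₃ : degree (Λ ^ 2 • (p * derivative (derivative q))) < degree (p * q) := by
    refine (degree_smul_le _ _).trans_lt ?_
    rw [degree_mul, hpq]; exact WithBot.add_lt_add_of_le_of_lt hp_bot le_rfl hq₂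
  exact (degree_add_le _ _).trans_lt
    (max_lt ((degree_sub_le _ _).trans_lt (max_lt h₁ h₂)) h₃)

theorem bilinearBracket_eq_zero_iff_mul_dvd [IsDomain R] (Λ : R) {p q : R[X]} (hp : p ≠ 0)
    (hq : q ≠ 0) : bilinearBracket Λ p q = 0 ↔ p * q ∣ bilinearBracket Λ p q :=
  ⟨fun h => h ▸ dvd_zero _,
    fun h => eq_zero_of_dvd_of_degree_lt h (degree_bilinearBracket_lt Λ hp hq)⟩

theorem dvd_bilinearBracket_two_iff_left [CharZero K] (p q : K[X]) :
    q ∣ bilinearBracket 2 p q ↔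
      q ∣ derivative p * derivative q - p * derivative (derivative q) := by
  have h : bilinearBracket 2 p q = q * derivative (derivative p)
      - C 4 * (derivative p * derivative q - p * derivative (derivative q)) := by
    rw [bilinearBracket_two, C_ofNat]; ring
  have h₄ : IsUnit (C (4 : K)) := isUnit_C.mpr (isUnit_iff_ne_zero.mpr (by norm_num))
  rw [h, dvd_sub_right (dvd_mul_right _ _), h₄.dvd_mul_left]

theorem dvd_bilinearBracket_two_iff_right [CharZero K] {p q : K[X]} (hpq : IsCoprime p q) :
    p ∣ bilinearBracket 2 p q ↔
      p ∣ derivative (q ^ 4) * derivative p - q ^ 4 * derivative (derivative p) := by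
  have h₁ : bilinearBracket 2 p q = p * (4 * derivative (derivative q))
      - (4 * derivative q * derivative p - q * derivative (derivative p)) := by
    rw [bilinearBracket_two]; ring
  have h₂ : derivative (q ^ 4) * derivative p - q ^ 4 * derivative (derivative p)
      = q ^ 3 * (4 * derivative q * derivative p - q * derivative (derivative p)) := by
    rw [derivative_pow, C_eq_natCast]; push_cast; ring
  rw [h₁, h₂, dvd_sub_right (dvd_mul_right _ _)]
  exact ⟨(dvd_mul_of_dvd_right · _), hpq.pow_right.dvd_of_dvd_mul_left⟩

end Polynomial

theorem rational_integrals_iff_bilinear_two_general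
    (p q : ℂ[X])
    (hsp : Squarefree p) (hsq : Squarefree q) (hpq : IsCoprime p q) :
    ((∃ a b : ℂ[X], b ≠ 0 ∧ (derivative a * b - a * derivative b) * q ^ 2 = p * b ^ 2) ∧
     (∃ c d : ℂ[X], d ≠ 0 ∧ (derivative c * d - c * derivative d) * p ^ 2 = q ^ 4 * d ^ 2)) ↔
    derivative (derivative p) * q - 4 * derivative p * derivative q
        + 4 * p * derivative (derivative q) = 0 := by
  have hwr (a b : ℂ[X]) : wronskian b a = derivative a * b - a * derivative b := by
    rw [wronskian]; ring
  have h := (hasRationalAntiderivative_div_sq_iff hsq hpq).and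
    (hasRationalAntiderivative_div_sq_iff hsp (hpq.symm.pow_left (m := 4)))
  simp only [HasRationalAntiderivative, hwr] at h
  rw [h, ← bilinearBracket_two, bilinearBracket_eq_zero_iff_mul_dvd 2 hsp.ne_zero hsq.ne_zero,
    ← dvd_bilinearBracket_two_iff_left, ← dvd_bilinearBracket_two_iff_right hpq]
  exact ⟨fun ⟨hq, hp⟩ => hpq.mul_dvd hp hq,
    fun h => ⟨dvd_of_mul_left_dvd h, dvd_of_mul_right_dvd h⟩⟩

/-- For squarefree coprime `p, q`, rationality of the antiderivatives of
`p/q²` and `q⁴/p²` is equivalent to `{p,q}_2 = 0`. -/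
theorem rational_integrals_iff_bilinear_two
    (p q : ℂ[X]) (hp : p ≠ 0) (hq : q ≠ 0)
    (hsp : Squarefree p) (hsq : Squarefree q) (hpq : IsCoprime p q) :
    ((∃ a b : ℂ[X], b ≠ 0 ∧ (derivative a * b - a * derivative b) * q ^ 2 = p * b ^ 2) ∧
     (∃ c d : ℂ[X], d ≠ 0 ∧ (derivative c * d - c * derivative d) * p ^ 2 = q ^ 4 * d ^ 2)) ↔
    derivative (derivative p) * q - 4 * derivative p * derivative q
        + 4 * p * derivative (derivative q) = 0 :=
  rational_integrals_iff_bilinear_two_general p q hsp hsq hpq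
end

section
/- Let Λ ∈ ℂ and let p, q ∈ ℂ[X] be nonzero polynomials with deg p = n and deg q = m satisfying p''·q − 2Λ·p'·q' + Λ²·p·q'' = 0. Then n(n−1) − 2Λ·n·m + Λ²·m(m−1) = 0. (Vanishing of the leading coefficient of {p,q}_Λ gives this constraint on the possible numbers of charges of values 1 and −Λ in equilibrium.) -/
open Polynomial

/-!
Multiplying by `X²` makes every term of `{p,q}_Λ` a product of two polynomials of degrees at most
`deg p` and `deg q`, because `X·d/dX` and `X²·d²/dX²` act on `X^k` by the scalars `k` and
`k(k-1)`. The coefficient of `X^(n+m)` in `X² {p,q}_Λ` is therefore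
`(n(n-1) - 2Λnm + Λ²m(m-1))` times the product of the leading coefficients, and it vanishes.
-/

namespace Polynomial

variable {R : Type*}

noncomputable def lambdaBracket [Ring R] (Λ : R) (p q : R[X]) : R[X] :=
  derivative (derivative p) * q - 2 * C Λ * derivative p * derivative q
    + C Λ ^ 2 * p * derivative (derivative q)

section Semiring

variable [Semiring R]

theorem coeff_X_mul_derivative (p : R[X]) (k : ℕ) :
    (X * derivative p).coeff k = k * p.coeff k := by
  cases k with
  | zero => simp
  | succ k => rw [coeff_X_mul, coeff_derivative, ← Nat.cast_succ, Nat.cast_comm]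

theorem natDegree_X_mul_derivative_le (p : R[X]) : (X * derivative p).natDegree ≤ p.natDegree :=
  natDegree_le_iff_coeff_eq_zero.mpr fun _ hN => by
    rw [coeff_X_mul_derivative, coeff_eq_zero_of_natDegree_lt hN, mul_zero]

end Semiring

section CommRing

variable [CommRing R]

theorem coeff_X_sq_mul_derivative_derivative (p : R[X]) (k : ℕ) :
    (X ^ 2 * derivative (derivative p)).coeff k = k * (k - 1) * p.coeff k := by
  match k with
  | 0 => simp
  | 1 => simp [pow_two, mul_assoc]
  | k + 2 =>
    rw [coeff_X_pow_mul', if_pos (by omega), Nat.add_sub_cancel, coeff_derivative,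
      coeff_derivative]
    push_cast
    ring

theorem natDegree_X_sq_mul_derivative_derivative_le (p : R[X]) :
    (X ^ 2 * derivative (derivative p)).natDegree ≤ p.natDegree :=
  natDegree_le_iff_coeff_eq_zero.mpr fun _ hN => by
    rw [coeff_X_sq_mul_derivative_derivative, coeff_eq_zero_of_natDegree_lt hN, mul_zero]

theorem coeff_X_sq_mul_lambdaBracket (Λ : R) (p q : R[X]) :
    (X ^ 2 * lambdaBracket Λ p q).coeff (p.natDegree + q.natDegree) =
      ((p.natDegree : R) * (p.natDegree - 1) - 2 * Λ * p.natDegree * q.natDegree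
        + Λ ^ 2 * q.natDegree * (q.natDegree - 1)) * p.leadingCoeff * q.leadingCoeff := by
  have hsplit : X ^ 2 * lambdaBracket Λ p q =
      (X ^ 2 * derivative (derivative p)) * q
        - C (2 * Λ) * ((X * derivative p) * (X * derivative q))
        + C (Λ ^ 2) * (p * (X ^ 2 * derivative (derivative q))) := by
    rw [lambdaBracket, C_mul, C_pow, map_ofNat]
    ring
  rw [hsplit, coeff_add, coeff_sub, coeff_C_mul, coeff_C_mul,
    coeff_mul_add_eq_of_natDegree_le (natDegree_X_sq_mul_derivative_derivative_le p) le_rfl,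
    coeff_mul_add_eq_of_natDegree_le (natDegree_X_mul_derivative_le p)
      (natDegree_X_mul_derivative_le q),
    coeff_mul_add_eq_of_natDegree_le le_rfl (natDegree_X_sq_mul_derivative_derivative_le q),
    coeff_X_sq_mul_derivative_derivative, coeff_X_mul_derivative, coeff_X_mul_derivative,
    coeff_X_sq_mul_derivative_derivative, leadingCoeff, leadingCoeff]
  ring

end CommRing

end Polynomial

/-- Vanishing of the leading coefficient of `{p,q}_Λ = 0` constrains the numbers of
charges: `n(n−1) − 2Λnm + Λ²m(m−1) = 0`. -/
theorem leading_coefficient_constraint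
    (Λ : ℂ) (p q : ℂ[X]) (hp : p ≠ 0) (hq : q ≠ 0) (n m : ℕ)
    (hn : p.natDegree = n) (hm : q.natDegree = m)
    (heq : derivative (derivative p) * q - 2 * C Λ * derivative p * derivative q
        + C Λ ^ 2 * p * derivative (derivative q) = 0) :
    (n : ℂ) * ((n : ℂ) - 1) - 2 * Λ * n * m + Λ ^ 2 * m * ((m : ℂ) - 1) = 0 := by
  subst hn hm
  have hcoeff := coeff_X_sq_mul_lambdaBracket Λ p q
  rw [show lambdaBracket Λ p q = 0 from heq, mul_zero, coeff_zero, eq_comm, mul_assoc] at hcoeff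
  exact (mul_eq_zero.mp hcoeff).resolve_right
    (mul_ne_zero (leadingCoeff_ne_zero.mpr hp) (leadingCoeff_ne_zero.mpr hq))
end
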